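/- Let G be a d-regular graph on n vertices. For any subset S of vertices with |S| = γn, the number e(S) of edges inside S satisfies (1/2)dγ²n + (1/2)λ_{n-1}γ(1−γ)n ≤ e(S) ≤ (1/2)dγ²n + (1/2)λ₁γ(1−γ)n, where λ₁ and λ_{n-1} are the second-largest and smallest eigenvalues of the adjacency matrix. -/

import Mathlib

open Matrix Polynomial
open scoped Classical RealInnerProductSpace


lemma charpoly_conj_unitary {n : ℕ} (U : Matrix (Fin n) (Fin n) ℝ)
    (hU : U ∈ Matrix.unitaryGroup (Fin n) ℝ) (D : Matrix (Fin n) (Fin n) ℝ) :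
    (U * D * star U).charpoly = D.charpoly := by
  have hUs : U * star U = 1 := hU.2
  have hsU : star U * U = 1 := hU.1
  have hmap : U.map C * (star U).map C = 1 := by
    rw [← Matrix.map_mul, hUs]; simp
  have hmap' : (star U).map C * U.map C = 1 := by
    rw [← Matrix.map_mul, hsU]; simp
  have h1 : (U * D * star U).charmatrix = U.map C * D.charmatrix * (star U).map C := by
    unfold charmatrix
    have hcomm : Commute (Matrix.scalar (Fin n) (X : ℝ[X])) (U.map C) :=
      scalar_commute _ (fun r' => Commute.all _ _) _
    rw [mul_sub, sub_mul]
    congr 1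
    · rw [← hcomm.eq, mul_assoc, hmap, mul_one]
    · simp [RingHom.mapMatrix_apply, ← Matrix.map_mul]
  unfold Matrix.charpoly
  rw [h1, det_mul, det_mul]
  have hdet : (U.map C).det * ((star U).map C).det = 1 := by
    rw [← det_mul, hmap]; simp
  calc (U.map C).det * D.charmatrix.det * ((star U).map C).det
      = (U.map C).det * ((star U).map C).det * D.charmatrix.det := by ring
    _ = D.charmatrix.det := by rw [hdet, one_mul]

lemma charpoly_eq_prod_eigenvalues {n : ℕ} (A : Matrix (Fin n) (Fin n) ℝ)
    (hA : A.IsHermitian) :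
    A.charpoly = ∏ i : Fin n, (X - C (hA.eigenvalues i)) := by
  have h := hA.spectral_theorem
  conv_lhs => rw [h]
  rw [Unitary.conjStarAlgAut_apply, charpoly_conj_unitary _ (hA.eigenvectorUnitary).2]
  have : (Matrix.diagonal (RCLike.ofReal ∘ hA.eigenvalues) : Matrix (Fin n) (Fin n) ℝ)
      = Matrix.diagonal hA.eigenvalues := by
    congr 1
  rw [this]
  have hcm : (Matrix.diagonal hA.eigenvalues).charmatrix
      = Matrix.diagonal (fun i => X - C (hA.eigenvalues i)) := by
    ext i j
    by_cases hij : i = j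
    · subst hij; simp [charmatrix_apply_eq]
    · simp [charmatrix_apply_ne _ _ _ hij, Matrix.diagonal_apply_ne _ hij]
  rw [Matrix.charpoly, hcm, Matrix.det_diagonal]

lemma multiset_eq_of_prod_eq {n : ℕ} (f g : Fin n → ℝ)
    (h : ∏ i : Fin n, (X - C (f i)) = ∏ i : Fin n, (X - C (g i))) :
    Multiset.map f Finset.univ.val = Multiset.map g Finset.univ.val := by
  have h1 := Polynomial.roots_multiset_prod_X_sub_C (Multiset.map f Finset.univ.val)
  have h2 := Polynomial.roots_multiset_prod_X_sub_C (Multiset.map g Finset.univ.val)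
  rw [Multiset.map_map] at h1 h2
  rw [← h1, ← h2]
  have he : ((Multiset.map f Finset.univ.val).map (fun a => X - C a)).prod
      = ((Multiset.map g Finset.univ.val).map (fun a => X - C a)).prod := by
    rw [Multiset.map_map, Multiset.map_map, ← Finset.prod_eq_multiset_prod,
      ← Finset.prod_eq_multiset_prod]
    simpa using h
  rw [Multiset.map_map, Multiset.map_map] at he
  rw [he]

lemma quad_expand {E : Type*} [NormedAddCommGroup E] [InnerProductSpace ℝ E]
    {n : ℕ} (b : OrthonormalBasis (Fin n) ℝ E) (T : E →ₗ[ℝ] E) (μ : Fin n → ℝ)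
    (hT : ∀ i, T (b i) = μ i • b i) (v : E) :
    ⟪v, T v⟫ = ∑ i, μ i * ⟪b i, v⟫ ^ 2 ∧ ⟪v, v⟫ = ∑ i, ⟪b i, v⟫ ^ 2 := by
  have horth := orthonormal_iff_ite.mp b.orthonormal
  have hv := b.sum_repr' v
  constructor
  · conv_lhs => rw [← hv]
    rw [_root_.map_sum]
    simp only [LinearMap.map_smul, hT, inner_sum, sum_inner, real_inner_smul_left,
      real_inner_smul_right, horth, smul_smul, mul_ite, mul_one, mul_zero,
      Finset.sum_ite_eq', Finset.mem_univ, if_true]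
    exact Finset.sum_congr rfl fun i _ => by ring
  · conv_lhs => rw [← hv]
    simp only [inner_sum, sum_inner, real_inner_smul_left, real_inner_smul_right, horth,
      mul_ite, mul_one, mul_zero, Finset.sum_ite_eq', Finset.mem_univ, if_true]
    exact Finset.sum_congr rfl fun i _ => by ring

section
variable {n : ℕ}

lemma inner_symm_eq_dot (u w : Fin n → ℝ) :
    ⟪(WithLp.equiv 2 (Fin n → ℝ)).symm u, (WithLp.equiv 2 (Fin n → ℝ)).symm w⟫ = u ⬝ᵥ w := by
  simp [PiLp.inner_apply, dotProduct, RCLike.inner_apply, mul_comm]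

lemma quad_form (A : Matrix (Fin n) (Fin n) ℝ) (hA : A.IsHermitian) (v : Fin n → ℝ) :
    v ⬝ᵥ (A *ᵥ v) = ∑ i, hA.eigenvalues i * ((⇑(hA.eigenvectorBasis i) : Fin n → ℝ) ⬝ᵥ v) ^ 2
    ∧ v ⬝ᵥ v = ∑ i, ((⇑(hA.eigenvectorBasis i) : Fin n → ℝ) ⬝ᵥ v) ^ 2 := by
  set b := hA.eigenvectorBasis
  have hT : ∀ i, Matrix.toEuclideanLin A (b i) = hA.eigenvalues i • b i := by
    intro i
    rw [Matrix.toEuclideanLin_apply, hA.mulVec_eigenvectorBasis i, WithLp.toLp_smul]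
  have h := quad_expand b (Matrix.toEuclideanLin A) hA.eigenvalues hT
    ((WithLp.equiv 2 (Fin n → ℝ)).symm v)
  have hbv : ∀ i, ⟪b i, (WithLp.equiv 2 (Fin n → ℝ)).symm v⟫
      = (⇑(b i) : Fin n → ℝ) ⬝ᵥ v := by
    intro i
    rw [← inner_symm_eq_dot]
    congr 1
  have hTv : ⟪(WithLp.equiv 2 (Fin n → ℝ)).symm v,
      Matrix.toEuclideanLin A ((WithLp.equiv 2 (Fin n → ℝ)).symm v)⟫ = v ⬝ᵥ (A *ᵥ v) := by
    rw [Matrix.toEuclideanLin_apply, ← inner_symm_eq_dot]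
    congr 1
  have hvv := inner_symm_eq_dot v v
  obtain ⟨h1, h2⟩ := h
  constructor
  · rw [← hTv, h1]; exact Finset.sum_congr rfl fun i _ => by rw [hbv]
  · rw [← hvv, h2]; exact Finset.sum_congr rfl fun i _ => by rw [hbv]

end

section
variable {n : ℕ}

lemma expand_dot (A : Matrix (Fin n) (Fin n) ℝ) (hA : A.IsHermitian) (v : Fin n → ℝ) :
    v = ∑ i, ((⇑(hA.eigenvectorBasis i) : Fin n → ℝ) ⬝ᵥ v) • (⇑(hA.eigenvectorBasis i) : Fin n → ℝ) := by
  set b := hA.eigenvectorBasis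
  have hv := b.sum_repr' ((WithLp.equiv 2 (Fin n → ℝ)).symm v)
  have h2 := congrArg (WithLp.linearEquiv 2 ℝ (Fin n → ℝ)) hv
  rw [map_sum] at h2
  have hco : ∀ i, ⟪b i, (WithLp.equiv 2 (Fin n → ℝ)).symm v⟫
      = (⇑(b i) : Fin n → ℝ) ⬝ᵥ v := by
    intro i
    rw [← inner_symm_eq_dot]
    congr 1
  calc v = (WithLp.linearEquiv 2 ℝ (Fin n → ℝ)) ((WithLp.equiv 2 (Fin n → ℝ)).symm v) := rfl
    _ = _ := by
        rw [← h2]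
        exact (Finset.sum_congr rfl fun i _ => by rw [LinearEquiv.map_smul, hco]; rfl).symm

variable (lam : Fin n → ℝ) (hn : 2 ≤ n)

lemma exists_lam_eq (μ : Fin n → ℝ)
    (hmul : Multiset.map lam Finset.univ.val = Multiset.map μ Finset.univ.val) (j : Fin n) :
    ∃ k, lam k = μ j := by
  have : μ j ∈ Multiset.map μ Finset.univ.val :=
    Multiset.mem_map_of_mem μ (Finset.mem_univ_val j)
  rw [← hmul] at this
  obtain ⟨k, _, hk⟩ := Multiset.mem_map.mp this
  exact ⟨k, hk⟩

end

section
variable {n : ℕ}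

lemma quad_lower (A : Matrix (Fin n) (Fin n) ℝ) (hA : A.IsHermitian)
    (lam : Fin n → ℝ) (hanti : Antitone lam) (hn : 2 ≤ n)
    (hmul : Multiset.map lam Finset.univ.val = Multiset.map hA.eigenvalues Finset.univ.val)
    (v : Fin n → ℝ) :
    lam ⟨n - 1, Nat.sub_lt (lt_of_lt_of_le two_pos hn) one_pos⟩ * (v ⬝ᵥ v) ≤ v ⬝ᵥ (A *ᵥ v) := by
  obtain ⟨h1, h2⟩ := quad_form A hA v
  rw [h1, h2, Finset.mul_sum]
  apply Finset.sum_le_sum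
  intro i _
  obtain ⟨k, hk⟩ := exists_lam_eq lam hA.eigenvalues hmul i
  have : lam ⟨n - 1, by omega⟩ ≤ hA.eigenvalues i := by
    rw [← hk]; exact hanti (by simp [Fin.le_def]; omega)
  exact mul_le_mul_of_nonneg_right this (sq_nonneg _)

lemma quad_upper (A : Matrix (Fin n) (Fin n) ℝ) (hA : A.IsHermitian)
    (lam : Fin n → ℝ) (hanti : Antitone lam) (hn : 2 ≤ n)
    (hmul : Multiset.map lam Finset.univ.val = Multiset.map hA.eigenvalues Finset.univ.val)
    (ho : A *ᵥ (fun _ => (1:ℝ)) = lam ⟨0, lt_of_lt_of_le two_pos hn⟩ • (fun _ => (1:ℝ)))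
    (v : Fin n → ℝ) (hortho : (fun _ => (1:ℝ)) ⬝ᵥ v = 0) :
    v ⬝ᵥ (A *ᵥ v) ≤ lam ⟨1, lt_of_lt_of_le one_lt_two hn⟩ * (v ⬝ᵥ v) := by
  classical
  set μ := hA.eigenvalues with hμ
  set B : Fin n → Fin n → ℝ := fun i => ⇑(hA.eigenvectorBasis i) with hB
  have h1 : v ⬝ᵥ (A *ᵥ v) = ∑ i, μ i * (B i ⬝ᵥ v) ^ 2 := (quad_form A hA v).1
  have h2 : v ⬝ᵥ v = ∑ i, (B i ⬝ᵥ v) ^ 2 := (quad_form A hA v).2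
  rw [h1, h2, Finset.mul_sum]
  by_cases hcase : lam ⟨0, by omega⟩ ≤ lam ⟨1, by omega⟩
  · apply Finset.sum_le_sum
    intro i _
    obtain ⟨k, hk⟩ := exists_lam_eq lam μ hmul i
    have : μ i ≤ lam ⟨1, by omega⟩ := by
      rw [← hk]
      exact le_trans (hanti (show (⟨0, by omega⟩ : Fin n) ≤ k by simp [Fin.le_def])) hcase
    exact mul_le_mul_of_nonneg_right this (sq_nonneg _)
  push_neg at hcase
  set d' := lam ⟨0, by omega⟩ with hd'
  have hcount_lam : Multiset.count d' (Multiset.map lam Finset.univ.val) = 1 := by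
    rw [Multiset.count_map]
    have hfv : Multiset.filter (fun a => d' = lam a) Finset.univ.val
        = (Finset.filter (fun a => d' = lam a) Finset.univ).val := by
      simp [Finset.filter_val]
    rw [hfv]
    have hfe : Finset.filter (fun a => d' = lam a) Finset.univ = {(⟨0, by omega⟩ : Fin n)} := by
      apply Finset.ext
      intro k
      simp only [Finset.mem_filter, Finset.mem_univ, true_and, Finset.mem_singleton]
      constructor
      · intro hk
        by_contra hne
        have hk1 : (⟨1, by omega⟩ : Fin n) ≤ k := by
          simp only [Fin.le_def]
          rcases Nat.eq_zero_or_pos k.1 with h0 | h0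
          · exact absurd (Fin.ext h0 : k = ⟨0, by omega⟩) hne
          · omega
        have h3 := hanti hk1
        rw [hk] at hcase
        linarith
      · intro hk; rw [hk]
    rw [hfe]; rfl
  have hcount_μ : Multiset.count d' (Multiset.map μ Finset.univ.val) = 1 := by
    rw [← hmul]; exact hcount_lam
  have hmem : d' ∈ Multiset.map μ Finset.univ.val := by
    rw [← Multiset.count_pos, hcount_μ]; omega
  obtain ⟨j₀, _, hj₀⟩ := Multiset.mem_map.mp hmem
  have huniq : ∀ j, j ≠ j₀ → μ j ≠ d' := by
    intro j hj hμj
    have hsub : {j, j₀} ⊆ Finset.filter (fun a => d' = μ a) Finset.univ := by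
      intro t ht
      simp only [Finset.mem_insert, Finset.mem_singleton] at ht
      rcases ht with rfl | rfl <;> simp [hμj, hj₀]
    have hle := Finset.card_le_card hsub
    rw [Finset.card_insert_of_notMem (by simpa using hj), Finset.card_singleton] at hle
    rw [Multiset.count_map] at hcount_μ
    have hfv : Multiset.filter (fun a => d' = μ a) Finset.univ.val
        = (Finset.filter (fun a => d' = μ a) Finset.univ).val := by
      simp [Finset.filter_val]
    rw [hfv] at hcount_μ
    have : (Finset.filter (fun a => d' = μ a) Finset.univ).card = 1 := hcount_μ
    omega
  have hsymm : Aᵀ = A := by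
    ext i j
    have h := congrFun (congrFun (hA : Aᴴ = A) i) j
    simpa [Matrix.conjTranspose_apply] using h
  set o : Fin n → ℝ := fun _ => 1 with hodef
  have hBo : ∀ j, j ≠ j₀ → B j ⬝ᵥ o = 0 := by
    intro j hj
    have e1 : B j ⬝ᵥ (A *ᵥ o) = d' * (B j ⬝ᵥ o) := by
      rw [show A *ᵥ o = d' • o from ho]
      simp [dotProduct_smul]
    have e2 : B j ⬝ᵥ (A *ᵥ o) = μ j * (B j ⬝ᵥ o) := by
      rw [Matrix.dotProduct_mulVec, ← Matrix.mulVec_transpose, hsymm]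
      rw [show A *ᵥ B j = μ j • B j from hA.mulVec_eigenvectorBasis j,
        smul_dotProduct]
      rfl
    have hne0 := huniq j hj
    have hne : μ j - d' ≠ 0 := fun h => hne0 (by linarith [sub_eq_zero.mp h])
    have hz : (μ j - d') * (B j ⬝ᵥ o) = 0 := by rw [sub_mul, e1.symm.trans e2]; ring
    rcases mul_eq_zero.mp hz with h | h
    · exact absurd h hne
    · exact h
  have hexp : o = ∑ i, (B i ⬝ᵥ o) • B i := expand_dot A hA o
  have ho_eq : o = (B j₀ ⬝ᵥ o) • B j₀ := by
    conv_lhs => rw [hexp]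
    rw [Finset.sum_eq_single j₀ (fun b _ hb => by rw [hBo b hb, zero_smul])
      (fun h => absurd (Finset.mem_univ j₀) h)]
  have ht : B j₀ ⬝ᵥ o ≠ 0 := by
    intro h
    have h0 := congrFun ho_eq ⟨0, by omega⟩
    rw [h, zero_smul] at h0
    simp only [hodef] at h0
    exact one_ne_zero (h0.trans rfl)
  have hcj₀ : B j₀ ⬝ᵥ v = 0 := by
    have hz : o ⬝ᵥ v = 0 := hortho
    rw [ho_eq, smul_dotProduct] at hz
    rcases mul_eq_zero.mp hz with h | h
    · exact absurd h ht
    · exact h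
  apply Finset.sum_le_sum
  intro i _
  by_cases hi : i = j₀
  · subst hi
    rw [hcj₀]
    simp
  · obtain ⟨k, hk⟩ := exists_lam_eq lam μ hmul i
    have hk0 : k ≠ ⟨0, by omega⟩ := by
      intro h; rw [h, ← hd'] at hk; exact huniq i hi hk.symm
    have hk1 : (⟨1, by omega⟩ : Fin n) ≤ k := by
      simp only [Fin.le_def]
      rcases Nat.eq_zero_or_pos k.1 with h0 | h0
      · exact absurd (Fin.ext h0 : k = ⟨0, by omega⟩) hk0
      · omega
    have hle : μ i ≤ lam ⟨1, by omega⟩ := by rw [← hk]; exact hanti hk1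
    exact mul_le_mul_of_nonneg_right hle (sq_nonneg _)

end

section
variable {n : ℕ}

lemma adj_hermitian (G : SimpleGraph (Fin n)) : (G.adjMatrix ℝ).IsHermitian := by
  unfold Matrix.IsHermitian
  ext i j
  simp [Matrix.conjTranspose_apply, SimpleGraph.adjMatrix_apply, SimpleGraph.adj_comm]

lemma adj_mulVec_ones {d : ℕ} (G : SimpleGraph (Fin n)) (hreg : G.IsRegularOfDegree d) :
    G.adjMatrix ℝ *ᵥ (fun _ => (1:ℝ)) = (d : ℝ) • (fun _ => (1:ℝ)) := by
  funext v
  rw [SimpleGraph.adjMatrix_mulVec_apply]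
  simp only [Finset.sum_const, nsmul_eq_mul, mul_one, Pi.smul_apply, smul_eq_mul]
  have : (G.neighborFinset v).card = d := hreg v
  rw [this]

lemma dot_ones (v : Fin n → ℝ) : (fun _ => (1:ℝ)) ⬝ᵥ v = ∑ i, v i := by
  simp [dotProduct]

lemma indicator_dot (S : Finset (Fin n)) :
    (fun i => if i ∈ S then (1:ℝ) else 0) ⬝ᵥ (fun i => if i ∈ S then (1:ℝ) else 0)
      = S.card := by
  simp [dotProduct, ite_and, Finset.sum_ite_mem]

lemma ones_dot_indicator (S : Finset (Fin n)) :
    (fun _ => (1:ℝ)) ⬝ᵥ (fun i => if i ∈ S then (1:ℝ) else 0) = S.card := by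
  simp [dotProduct]

lemma quad_ind_eq_two_mul_edges (G : SimpleGraph (Fin n)) (S : Finset (Fin n)) :
    (fun i => if i ∈ S then (1:ℝ) else 0) ⬝ᵥ
      (G.adjMatrix ℝ *ᵥ (fun i => if i ∈ S then (1:ℝ) else 0))
    = 2 * ((G.edgeFinset.filter fun e => ∀ v ∈ e, v ∈ S).card : ℝ) := by
  classical
  set G' : SimpleGraph (Fin n) :=
    { Adj := fun a b => G.Adj a b ∧ a ∈ S ∧ b ∈ S
      symm := by constructor; intro a b h; exact ⟨h.1.symm, h.2.2, h.2.1⟩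
      loopless := by constructor; intro a h; exact G.loopless.irrefl a h.1 } with hG'
  have step1 : (fun i => if i ∈ S then (1:ℝ) else 0) ⬝ᵥ
      (G.adjMatrix ℝ *ᵥ (fun i => if i ∈ S then (1:ℝ) else 0))
      = ((Finset.univ.filter fun p : Fin n × Fin n => G'.Adj p.1 p.2).card : ℝ) := by
    simp only [dotProduct, Matrix.mulVec, SimpleGraph.adjMatrix_apply, hG']
    rw [← Finset.sum_boole (p := fun p : Fin n × Fin n => G'.Adj p.1 p.2)]
    rw [Fintype.sum_prod_type]
    apply Finset.sum_congr rfl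
    intro a _
    rw [Finset.mul_sum]
    apply Finset.sum_congr rfl
    intro b _
    by_cases h1 : a ∈ S <;> by_cases h2 : b ∈ S <;> by_cases h3 : G.Adj a b <;>
      simp [h1, h2, h3, hG']
  have step2 : 2 * G'.edgeFinset.card
      = (Finset.univ.filter fun p : Fin n × Fin n => G'.Adj p.1 p.2).card := by
    rw [SimpleGraph.two_mul_card_edgeFinset]
  have step3 : G'.edgeFinset = G.edgeFinset.filter fun e => ∀ v ∈ e, v ∈ S := by
    ext e
    refine Sym2.ind (fun a b => ?_) e
    simp only [SimpleGraph.mem_edgeFinset, Finset.mem_filter, SimpleGraph.mem_edgeSet,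
      Sym2.mem_iff, hG']
    constructor
    · rintro ⟨h1, h2, h3⟩
      refine ⟨h1, ?_⟩
      rintro v (rfl | rfl) <;> assumption
    · rintro ⟨h1, h2⟩
      exact ⟨h1, h2 a (Or.inl rfl), h2 b (Or.inr rfl)⟩
  rw [step1, ← step3]
  rw [show ((Finset.univ.filter fun p : Fin n × Fin n => G'.Adj p.1 p.2).card : ℝ)
    = ((2 * G'.edgeFinset.card : ℕ) : ℝ) from by rw [step2]]
  push_cast
  ring

end

/-- Refined Alon–Chung bound: with adjacency eigenvalues
`d = lam 0 ≥ lam 1 ≥ ⋯ ≥ lam (n-1)`, for any `S` with `|S| = γ n` the number of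
edges inside `S` satisfies
`(1/2) d γ² n + (1/2) λ_{n-1} γ (1-γ) n ≤ e(S) ≤ (1/2) d γ² n + (1/2) λ₁ γ (1-γ) n`. -/
theorem alon_chung_refined
    (n d : ℕ) (hn : 2 ≤ n) (G : SimpleGraph (Fin n))
    (hreg : G.IsRegularOfDegree d)
    (lam : Fin n → ℝ) (hanti : Antitone lam)
    (hlam0 : lam ⟨0, by omega⟩ = d)
    (hchar : (G.adjMatrix ℝ).charpoly = ∏ i : Fin n, (X - C (lam i)))
    (γ : ℝ) (S : Finset (Fin n)) (hS : (S.card : ℝ) = γ * n) :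
    (1 / 2) * d * γ ^ 2 * n + (1 / 2) * lam ⟨n - 1, by omega⟩ * γ * (1 - γ) * n
      ≤ ((G.edgeFinset.filter fun e => ∀ v ∈ e, v ∈ S).card : ℝ)
    ∧ ((G.edgeFinset.filter fun e => ∀ v ∈ e, v ∈ S).card : ℝ)
      ≤ (1 / 2) * d * γ ^ 2 * n + (1 / 2) * lam ⟨1, by omega⟩ * γ * (1 - γ) * n := by
  classical
  set A := G.adjMatrix ℝ with hAdef
  have hA : A.IsHermitian := adj_hermitian G
  have hmul : Multiset.map lam Finset.univ.val
      = Multiset.map hA.eigenvalues Finset.univ.val := by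
    apply multiset_eq_of_prod_eq
    rw [← hchar, charpoly_eq_prod_eigenvalues A hA]
  have ho : A *ᵥ (fun _ => (1:ℝ)) = lam ⟨0, by omega⟩ • (fun _ => (1:ℝ)) := by
    rw [hlam0]
    exact adj_mulVec_ones G hreg
  set x : Fin n → ℝ := fun i => if i ∈ S then (1:ℝ) else 0 with hxdef
  set o : Fin n → ℝ := fun _ => (1:ℝ) with hodef
  set y : Fin n → ℝ := x - γ • o with hydef
  have hxx : x ⬝ᵥ x = γ * n := by rw [hxdef, indicator_dot, hS]
  have hox : o ⬝ᵥ x = γ * n := by rw [hxdef, hodef, ones_dot_indicator, hS]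
  have hxo : x ⬝ᵥ o = γ * n := by rw [dotProduct_comm]; exact hox
  have hoo : o ⬝ᵥ o = (n : ℝ) := by simp [hodef, dotProduct]
  have hoy : o ⬝ᵥ y = 0 := by
    rw [hydef, dotProduct_sub, dotProduct_smul, hox, hoo]
    simp
  have hyo : y ⬝ᵥ o = 0 := by rw [dotProduct_comm]; exact hoy
  have hyy : y ⬝ᵥ y = γ * (1 - γ) * n := by
    rw [hydef, dotProduct_sub, sub_dotProduct, sub_dotProduct,
      dotProduct_smul, dotProduct_smul, smul_dotProduct,
      smul_dotProduct, hxx, hxo, hox, hoo]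
    simp only [smul_eq_mul]
    ring
  have hAo : A *ᵥ o = (d : ℝ) • o := adj_mulVec_ones G hreg
  have hsymm : ∀ u w : Fin n → ℝ, u ⬝ᵥ (A *ᵥ w) = (A *ᵥ u) ⬝ᵥ w := by
    intro u w
    rw [Matrix.dotProduct_mulVec, ← Matrix.mulVec_transpose]
    congr 1
    exact congrFun (congrArg _ (SimpleGraph.transpose_adjMatrix G)) u
  have hdecomp : x ⬝ᵥ (A *ᵥ x) = y ⬝ᵥ (A *ᵥ y) + γ ^ 2 * ((d:ℝ) * n) := by
    have hx_eq : x = y + γ • o := by rw [hydef]; abel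
    rw [hx_eq]
    rw [Matrix.mulVec_add, Matrix.mulVec_smul]
    rw [add_dotProduct, dotProduct_add, dotProduct_add]
    rw [smul_dotProduct, smul_dotProduct, dotProduct_smul,
      dotProduct_smul]
    rw [hAo, dotProduct_smul, hyo]
    have h1 : o ⬝ᵥ (A *ᵥ y) = 0 := by
      rw [hsymm o y, hAo, smul_dotProduct, hoy]
      simp
    have h2 : o ⬝ᵥ ((d:ℝ) • o) = (d:ℝ) * n := by
      rw [dotProduct_smul, hoo]; rfl
    rw [h1, h2]
    simp only [smul_eq_mul]
    ring
  have hquad : x ⬝ᵥ (A *ᵥ x)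
      = 2 * ((G.edgeFinset.filter fun e => ∀ v ∈ e, v ∈ S).card : ℝ) :=
    quad_ind_eq_two_mul_edges G S
  have hlow := quad_lower A hA lam hanti hn hmul y
  have hupp := quad_upper A hA lam hanti hn hmul ho y hoy
  rw [hyy] at hlow hupp
  rw [hquad] at hdecomp
  constructor
  · have e1 : (1 / 2) * (d:ℝ) * γ ^ 2 * n + (1 / 2) * lam ⟨n - 1, by omega⟩ * γ * (1 - γ) * n
        = (lam ⟨n - 1, by omega⟩ * (γ * (1 - γ) * n) + γ ^ 2 * ((d:ℝ) * n)) / 2 := by ring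
    rw [e1]
    linarith
  · have e2 : (1 / 2) * (d:ℝ) * γ ^ 2 * n + (1 / 2) * lam ⟨1, by omega⟩ * γ * (1 - γ) * n
        = (lam ⟨1, by omega⟩ * (γ * (1 - γ) * n) + γ ^ 2 * ((d:ℝ) * n)) / 2 := by ring
    rw [e2]
    linarith
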